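/- arXiv:2503.18756 — 3 statements merged into one kernel-verified Lean document; each statement's English description precedes it below -/
import Mathlib

section
/- Let X and I be discrete random variables, T a {0,1}-valued random variable with 0 < P(T=1|X=x,I=i) < 1 whenever P(X=x,I=i)>0, and suppose Y = f(T,X) + g(I,X) + ε where ε has mean zero and is independent of (T,X,I). Then E[ 1_{T=1} Y / P(T=1|X,I) ] − E[ 1_{T=0} Y / (1 − P(T=1|X,I)) ] = E[ f(1,X) − f(0,X) ]. -/
open Finset
open scoped Classical

noncomputable section

/-- Probability of an event under a weight function on a finite sample space. -/
def PrW {Ω : Type*} [Fintype Ω] (w : Ω → ℝ) (A : Ω → Prop) : ℝ :=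
  ∑ ω ∈ Finset.univ.filter A, w ω

/-- Expectation under a weight function on a finite sample space. -/
def ExW {Ω : Type*} [Fintype Ω] (w : Ω → ℝ) (f : Ω → ℝ) : ℝ :=
  ∑ ω, w ω * f ω

/-- Conditional probability P(A | B). -/
def cPr {Ω : Type*} [Fintype Ω] (w : Ω → ℝ) (A B : Ω → Prop) : ℝ :=
  PrW w (fun ω => A ω ∧ B ω) / PrW w B

/-- Conditional expectation E[f | B]. -/
def cEx {Ω : Type*} [Fintype Ω] (w : Ω → ℝ) (f : Ω → ℝ) (B : Ω → Prop) : ℝ :=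
  (∑ ω ∈ Finset.univ.filter B, w ω * f ω) / PrW w B

/-- Propensity score p(x,i) = P(T = 1 | X = x, I = i). -/
def propens {Ω 𝓧 𝓘 : Type*} [Fintype Ω] (w : Ω → ℝ) (T : Ω → Bool) (X : Ω → 𝓧)
    (I : Ω → 𝓘) (x : 𝓧) (i : 𝓘) : ℝ :=
  cPr w (fun ω => T ω = true) (fun ω => X ω = x ∧ I ω = i)

lemma sum_over_sets_eq {Ω : Type*} [Fintype Ω] (F : Ω → ℝ) (s t : Finset Ω)
    (h : ∀ ω, ω ∈ s ↔ ω ∈ t) :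
    ∑ ω ∈ s, F ω = ∑ ω ∈ t, F ω :=
  Finset.sum_congr (Finset.ext h) fun _ _ => rfl

lemma sum_filter_eq_PrW {Ω : Type*} [Fintype Ω] (w : Ω → ℝ) (A : Ω → Prop)
    [DecidablePred A] :
    ∑ ω ∈ Finset.univ.filter A, w ω = PrW w A := by
  unfold PrW
  exact sum_over_sets_eq w _ _ (fun ω => by simp [Finset.mem_filter])

lemma fiber_sum {Ω : Type*} [Fintype Ω] (w ε : Ω → ℝ) (B : Finset Ω) :
    ∑ ω ∈ B, w ω * ε ω
      = ∑ s ∈ Finset.univ.image ε, (∑ ω ∈ B.filter (fun ω => ε ω = s), w ω) * s := by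
  rw [← Finset.sum_fiberwise_of_maps_to (g := ε)
      (fun ω _ => Finset.mem_image_of_mem ε (Finset.mem_univ ω)) (fun ω => w ω * ε ω)]
  refine Finset.sum_congr rfl fun s _ => ?_
  rw [Finset.sum_mul]
  refine Finset.sum_congr rfl fun ω hω => ?_
  rw [(Finset.mem_filter.mp hω).2]

lemma err_sum {Ω 𝓧 𝓘 : Type*} [Fintype Ω]
    (w : Ω → ℝ) (T : Ω → Bool) (X : Ω → 𝓧) (I : Ω → 𝓘) (ε : Ω → ℝ)
    (hmean : ExW w ε = 0)
    (hindep : ∀ (s : ℝ) (t : Bool) (x : 𝓧) (i : 𝓘),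
      PrW w (fun ω => ε ω = s ∧ T ω = t ∧ X ω = x ∧ I ω = i) =
      PrW w (fun ω => ε ω = s) * PrW w (fun ω => T ω = t ∧ X ω = x ∧ I ω = i))
    (t : Bool) (x : 𝓧) (i : 𝓘) :
    ∑ ω ∈ Finset.univ.filter (fun ω => T ω = t ∧ X ω = x ∧ I ω = i), w ω * ε ω = 0 := by
  have hE : ExW w ε = ∑ s ∈ Finset.univ.image ε, PrW w (fun ω => ε ω = s) * s := by
    simpa [ExW, PrW] using fiber_sum w ε Finset.univ
  rw [fiber_sum]
  have step : ∀ s ∈ Finset.univ.image ε,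
      (∑ ω ∈ (Finset.univ.filter (fun ω => T ω = t ∧ X ω = x ∧ I ω = i)).filter
          (fun ω => ε ω = s), w ω) * s
        = PrW w (fun ω => T ω = t ∧ X ω = x ∧ I ω = i) * (PrW w (fun ω => ε ω = s) * s) := by
    intro s _
    have hset : ∑ ω ∈ (Finset.univ.filter (fun ω => T ω = t ∧ X ω = x ∧ I ω = i)).filter
          (fun ω => ε ω = s), w ω
        = PrW w (fun ω => ε ω = s ∧ T ω = t ∧ X ω = x ∧ I ω = i) := by
      rw [← sum_filter_eq_PrW]
      exact sum_over_sets_eq w _ _ (fun ω => by simp [Finset.mem_filter]; tauto)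
    rw [hset, hindep s t x i]
    ring
  rw [Finset.sum_congr rfl step, ← Finset.mul_sum, ← hE, hmean, mul_zero]

/-- In the additive local-interference model `Y = f(T,X) + g(I,X) + ε`
with mean-zero noise independent of `(T,X,I)` and overlap, the IPW contrast identifies
the True Average Causal Effect `E[f(1,X) − f(0,X)]`. -/
theorem ipw_identifies_TACE {Ω 𝓧 𝓘 : Type*} [Fintype Ω]
    (w : Ω → ℝ) (hw0 : ∀ ω, 0 ≤ w ω) (hw1 : ∑ ω, w ω = 1)
    (T : Ω → Bool) (X : Ω → 𝓧) (I : Ω → 𝓘)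
    (f : Bool → 𝓧 → ℝ) (g : 𝓘 → 𝓧 → ℝ) (ε : Ω → ℝ) (Y : Ω → ℝ)
    (hY : ∀ ω, Y ω = f (T ω) (X ω) + g (I ω) (X ω) + ε ω)
    (hmean : ExW w ε = 0)
    (hindep : ∀ (s : ℝ) (t : Bool) (x : 𝓧) (i : 𝓘),
      PrW w (fun ω => ε ω = s ∧ T ω = t ∧ X ω = x ∧ I ω = i) =
      PrW w (fun ω => ε ω = s) * PrW w (fun ω => T ω = t ∧ X ω = x ∧ I ω = i))
    (overlap : ∀ x i, 0 < PrW w (fun ω => X ω = x ∧ I ω = i) →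
      0 < propens w T X I x i ∧ propens w T X I x i < 1) :
    ExW w (fun ω => (if T ω = true then Y ω else 0) / propens w T X I (X ω) (I ω)) -
      ExW w (fun ω => (if T ω = false then Y ω else 0) / (1 - propens w T X I (X ω) (I ω))) =
    ExW w (fun ω => f true (X ω) - f false (X ω)) := by

  have err := err_sum w T X I ε hmean hindep
  have group : ∀ (x : 𝓧) (i : 𝓘),
      ∑ ω ∈ Finset.univ.filter (fun ω => X ω = x ∧ I ω = i),
        (w ω * ((if T ω = true then Y ω else 0) / propens w T X I (X ω) (I ω)) -
         w ω * ((if T ω = false then Y ω else 0) / (1 - propens w T X I (X ω) (I ω)))) =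
      ∑ ω ∈ Finset.univ.filter (fun ω => X ω = x ∧ I ω = i),
        w ω * (f true (X ω) - f false (X ω)) := by
    intro x i
    set S : Finset Ω := Finset.univ.filter (fun ω => X ω = x ∧ I ω = i) with hS
    have hmemS : ∀ ω ∈ S, X ω = x ∧ I ω = i := fun ω hω => (Finset.mem_filter.mp hω).2
    have lhs_rw : ∑ ω ∈ S,
        (w ω * ((if T ω = true then Y ω else 0) / propens w T X I (X ω) (I ω)) -
         w ω * ((if T ω = false then Y ω else 0) / (1 - propens w T X I (X ω) (I ω)))) =
        ∑ ω ∈ S,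
        (w ω * ((if T ω = true then Y ω else 0) / propens w T X I x i) -
         w ω * ((if T ω = false then Y ω else 0) / (1 - propens w T X I x i))) := by
      refine Finset.sum_congr rfl fun ω hω => ?_
      obtain ⟨hx, hi⟩ := hmemS ω hω
      rw [hx, hi]
    have rhs_rw : ∑ ω ∈ S, w ω * (f true (X ω) - f false (X ω))
        = ∑ ω ∈ S, w ω * (f true x - f false x) := by
      refine Finset.sum_congr rfl fun ω hω => ?_
      rw [(hmemS ω hω).1]
    rw [lhs_rw, rhs_rw]
    have hPsum : ∑ ω ∈ S, w ω = PrW w (fun ω => X ω = x ∧ I ω = i) := by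
      rw [hS]; exact sum_filter_eq_PrW w _
    have hPnn : 0 ≤ PrW w (fun ω => X ω = x ∧ I ω = i) := by
      rw [← hPsum]; exact Finset.sum_nonneg fun ω _ => hw0 ω
    rcases eq_or_lt_of_le hPnn with hP0 | hPpos
    · have hz : ∀ ω ∈ S, w ω = 0 :=
        (Finset.sum_eq_zero_iff_of_nonneg (fun ω _ => hw0 ω)).mp (hPsum.trans hP0.symm)
      refine Eq.trans (Finset.sum_eq_zero fun ω hω => ?_)
        (Finset.sum_eq_zero fun ω hω => ?_).symm
      · rw [hz ω hω]; ring
      · rw [hz ω hω]; ring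
    · obtain ⟨hp0, hp1⟩ := overlap x i hPpos
      have hp : propens w T X I x i
          = PrW w (fun ω => T ω = true ∧ X ω = x ∧ I ω = i)
            / PrW w (fun ω => X ω = x ∧ I ω = i) := rfl
      have hfilsum : ∀ (t : Bool) (F : Ω → ℝ),
          ∑ ω ∈ S.filter (fun ω => T ω = t), F ω
            = ∑ ω ∈ Finset.univ.filter (fun ω => T ω = t ∧ X ω = x ∧ I ω = i), F ω := by
        intro t F
        refine sum_over_sets_eq F _ _ fun ω => ?_
        simp only [hS, Finset.mem_filter, Finset.mem_univ, true_and]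
        tauto
      have hP1sum : ∑ ω ∈ S.filter (fun ω => T ω = true), w ω
          = PrW w (fun ω => T ω = true ∧ X ω = x ∧ I ω = i) := by
        rw [hfilsum true w]; exact sum_filter_eq_PrW w _
      have hP0sum : ∑ ω ∈ S.filter (fun ω => T ω = false), w ω
          = PrW w (fun ω => T ω = false ∧ X ω = x ∧ I ω = i) := by
        rw [hfilsum false w]; exact sum_filter_eq_PrW w _
      have hsplit : PrW w (fun ω => T ω = true ∧ X ω = x ∧ I ω = i)
          + PrW w (fun ω => T ω = false ∧ X ω = x ∧ I ω = i)
          = PrW w (fun ω => X ω = x ∧ I ω = i) := by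
        have h := Finset.sum_filter_add_sum_filter_not S (fun ω => T ω = true) w
        have h2 : S.filter (fun ω => ¬ T ω = true) = S.filter (fun ω => T ω = false) := by
          ext ω; simp
        rw [h2, hP1sum, hP0sum, hPsum] at h
        exact h
      have hP1pos : 0 < PrW w (fun ω => T ω = true ∧ X ω = x ∧ I ω = i) := by
        have h := hp0
        rw [hp] at h
        have := mul_pos h hPpos
        rwa [div_mul_cancel₀ _ hPpos.ne'] at this
      have hP0pos : 0 < PrW w (fun ω => T ω = false ∧ X ω = x ∧ I ω = i) := by
        have h := hp1
        rw [hp] at h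
        have := (div_lt_one hPpos).mp h
        linarith
      have hsum : ∀ (t : Bool) (c : ℝ), (∀ ω ∈ S.filter (fun ω => T ω = t), Y ω = c + ε ω) →
          ∑ ω ∈ S.filter (fun ω => T ω = t), w ω * Y ω
            = c * ∑ ω ∈ S.filter (fun ω => T ω = t), w ω := by
        intro t c hc
        have h1 : ∑ ω ∈ S.filter (fun ω => T ω = t), w ω * Y ω
            = ∑ ω ∈ S.filter (fun ω => T ω = t), (w ω * c + w ω * ε ω) := by
          refine Finset.sum_congr rfl fun ω hω => ?_
          rw [hc ω hω]; ring
        have herr : ∑ ω ∈ S.filter (fun ω => T ω = t), w ω * ε ω = 0 := by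
          rw [hfilsum t (fun ω => w ω * ε ω)]
          exact err t x i
        rw [h1, Finset.sum_add_distrib, herr, add_zero, ← Finset.sum_mul, mul_comm]
      have hT1 : ∑ ω ∈ S.filter (fun ω => T ω = true), w ω * Y ω
          = (f true x + g i x) * PrW w (fun ω => T ω = true ∧ X ω = x ∧ I ω = i) := by
        rw [← hP1sum]
        refine hsum true _ fun ω hω => ?_
        obtain ⟨hm, hT⟩ := Finset.mem_filter.mp hω
        obtain ⟨hx, hi⟩ := hmemS ω hm
        rw [hY ω, hT, hx, hi]
      have hT0 : ∑ ω ∈ S.filter (fun ω => T ω = false), w ω * Y ω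
          = (f false x + g i x) * PrW w (fun ω => T ω = false ∧ X ω = x ∧ I ω = i) := by
        rw [← hP0sum]
        refine hsum false _ fun ω hω => ?_
        obtain ⟨hm, hT⟩ := Finset.mem_filter.mp hω
        obtain ⟨hx, hi⟩ := hmemS ω hm
        rw [hY ω, hT, hx, hi]
      have htreat : ∑ ω ∈ S, w ω * ((if T ω = true then Y ω else 0) / propens w T X I x i)
          = (f true x + g i x) * PrW w (fun ω => X ω = x ∧ I ω = i) := by
        have h1 : ∑ ω ∈ S, w ω * ((if T ω = true then Y ω else 0) / propens w T X I x i)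
            = ∑ ω ∈ S.filter (fun ω => T ω = true),
                w ω * Y ω / propens w T X I x i := by
          rw [Finset.sum_filter (s := S) (p := fun ω => T ω = true)
            (f := fun ω => w ω * Y ω / propens w T X I x i)]
          refine Finset.sum_congr rfl fun ω _ => ?_
          by_cases h : T ω = true <;> simp [h, mul_div_assoc]
        rw [h1, ← Finset.sum_div, hT1, hp]
        rw [div_div_eq_mul_div, div_eq_iff (by positivity)]
        ring
      have hctrl : ∑ ω ∈ S, w ω * ((if T ω = false then Y ω else 0) / (1 - propens w T X I x i))
          = (f false x + g i x) * PrW w (fun ω => X ω = x ∧ I ω = i) := by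
        have h1p : 1 - propens w T X I x i
            = PrW w (fun ω => T ω = false ∧ X ω = x ∧ I ω = i)
              / PrW w (fun ω => X ω = x ∧ I ω = i) := by
          rw [hp, eq_div_iff hPpos.ne', sub_mul, one_mul,
            div_mul_cancel₀ _ hPpos.ne']
          linarith
        have h1 : ∑ ω ∈ S, w ω * ((if T ω = false then Y ω else 0) / (1 - propens w T X I x i))
            = ∑ ω ∈ S.filter (fun ω => T ω = false),
                w ω * Y ω / (1 - propens w T X I x i) := by
          rw [Finset.sum_filter (s := S) (p := fun ω => T ω = false)
            (f := fun ω => w ω * Y ω / (1 - propens w T X I x i))]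
          refine Finset.sum_congr rfl fun ω _ => ?_
          by_cases h : T ω = false <;> simp [h, mul_div_assoc]
        rw [h1, ← Finset.sum_div, hT0, h1p]
        rw [div_div_eq_mul_div, div_eq_iff (by positivity)]
        ring
      rw [Finset.sum_sub_distrib, htreat, hctrl, ← Finset.sum_mul, hPsum]
      ring
  have part : ∀ (F : Ω → ℝ), ∑ ω, F ω
      = ∑ q ∈ Finset.univ.image (fun ω => (X ω, I ω)),
          ∑ ω ∈ Finset.univ.filter (fun ω => X ω = q.1 ∧ I ω = q.2), F ω := by
    intro F
    rw [← Finset.sum_fiberwise_of_maps_to (g := fun ω => (X ω, I ω))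
      (fun ω _ => Finset.mem_image_of_mem _ (Finset.mem_univ ω)) F]
    refine Finset.sum_congr rfl fun q _ => ?_
    exact sum_over_sets_eq F _ _ (fun ω => by simp [Finset.mem_filter, Prod.ext_iff])
  simp only [ExW, ← Finset.sum_sub_distrib]
  rw [part (fun ω => w ω * ((if T ω = true then Y ω else 0) / propens w T X I (X ω) (I ω)) -
        w ω * ((if T ω = false then Y ω else 0) / (1 - propens w T X I (X ω) (I ω)))),
      part (fun ω => w ω * (f true (X ω) - f false (X ω)))]
  exact Finset.sum_congr rfl fun q _ => group q.1 q.2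
end
end

section
/- Under the multiplicative model Y = f(T,X)·g(I,X) + ε with ε mean zero and independent of (T,X,I), overlap 0 < P(T=1|X=x,I=i) < 1 on the support, and g(i,x) ≠ 0 and f(0,x) ≠ 0 on the support, the ratio of regression functions satisfies E[Y | T=1, X=x, I=i] / E[Y | T=0, X=x, I=i] = f(1,x)/f(0,x) for all (x,i) in the support; hence E[ E[Y|T=1,X,I] / E[Y|T=0,X,I] ] = E[ f(1,X)/f(0,X) ]. -/
open Finset
open scoped Classical

noncomputable section

section Aux
variable {Ω : Type*} [Fintype Ω]

lemma PrW_congr (w : Ω → ℝ) {A B : Ω → Prop} (h : ∀ ω, A ω ↔ B ω) :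
    PrW w A = PrW w B := by
  unfold PrW
  exact Finset.sum_congr (Finset.filter_congr fun ω _ => by simp [h ω]) fun _ _ => rfl

lemma sum_mul_eps (w ε : Ω → ℝ) (B : Ω → Prop) :
    ∑ ω ∈ Finset.univ.filter B, w ω * ε ω =
    ∑ s ∈ Finset.univ.image ε, s * PrW w (fun ω => ε ω = s ∧ B ω) := by
  rw [← Finset.sum_fiberwise_of_maps_to (g := ε) (t := Finset.univ.image ε)
        (fun ω _ => Finset.mem_image_of_mem ε (Finset.mem_univ ω))
        (fun ω => w ω * ε ω)]
  refine Finset.sum_congr rfl fun s _ => ?_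
  rw [PrW, Finset.mul_sum, Finset.filter_filter]
  refine Finset.sum_congr (by ext ω; simp; tauto) fun ω hω => ?_
  simp only [Finset.mem_filter] at hω
  rw [hω.2.1, mul_comm]

lemma ExW_eps (w ε : Ω → ℝ) :
    ExW w ε = ∑ s ∈ Finset.univ.image ε, s * PrW w (fun ω => ε ω = s) := by
  have h := sum_mul_eps w ε (fun _ => True)
  simp only [Finset.filter_true] at h
  rw [ExW, h]
  exact Finset.sum_congr rfl fun s _ => by
    rw [PrW_congr w (A := fun ω => ε ω = s ∧ True) (B := fun ω => ε ω = s) (fun ω => by simp)]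

/-- If ε is mean-zero and independent of the event B, the weighted noise sum over B vanishes. -/
lemma noise_zero (w ε : Ω → ℝ) (B : Ω → Prop) (hmean : ExW w ε = 0)
    (hind : ∀ s : ℝ, PrW w (fun ω => ε ω = s ∧ B ω) = PrW w (fun ω => ε ω = s) * PrW w B) :
    ∑ ω ∈ Finset.univ.filter B, w ω * ε ω = 0 := by
  rw [sum_mul_eps w ε B]
  have hc : ∀ s ∈ Finset.univ.image ε,
      s * PrW w (fun ω => ε ω = s ∧ B ω) = (s * PrW w (fun ω => ε ω = s)) * PrW w B := by
    intro s _; rw [hind s]; ring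
  rw [Finset.sum_congr rfl hc, ← Finset.sum_mul, ← ExW_eps, hmean, zero_mul]

/-- Conditional expectation of `c + ε` over `B` is `c` when the noise sum vanishes. -/
lemma cEx_const_add (w Y ε : Ω → ℝ) (c : ℝ) (B : Ω → Prop)
    (hval : ∀ ω, B ω → Y ω = c + ε ω)
    (hnoise : ∑ ω ∈ Finset.univ.filter B, w ω * ε ω = 0)
    (hB : 0 < PrW w B) :
    cEx w Y B = c := by
  rw [cEx]
  have hnum : ∑ ω ∈ Finset.univ.filter B, w ω * Y ω = c * PrW w B := by
    have hterm : ∀ ω ∈ Finset.univ.filter B, w ω * Y ω = c * w ω + w ω * ε ω := by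
      intro ω hω
      simp only [Finset.mem_filter] at hω
      rw [hval ω hω.2]; ring
    rw [Finset.sum_congr rfl hterm, Finset.sum_add_distrib, hnoise, add_zero,
      ← Finset.mul_sum, PrW]
  rw [hnum, mul_div_assoc, div_self (ne_of_gt hB), mul_one]

/-- Splitting a probability by the value of a Boolean variable. -/
lemma PrW_split (w : Ω → ℝ) (T : Ω → Bool) (C : Ω → Prop) :
    PrW w C = PrW w (fun ω => T ω = true ∧ C ω) + PrW w (fun ω => T ω = false ∧ C ω) := by
  unfold PrW
  rw [← Finset.sum_filter_add_sum_filter_not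
    (Finset.univ.filter C) (fun ω => T ω = true) w]
  congr 1
  · exact Finset.sum_congr (by ext ω; simp; tauto) fun _ _ => rfl
  · exact Finset.sum_congr (by ext ω; simp [Bool.not_eq_true]; tauto) fun _ _ => rfl

end Aux

/-- In the multiplicative model `Y = f(T,X)·g(I,X) + ε`, the ratio of
regression functions is `f(1,x)/f(0,x)` at every support point, and averaging the
conditional-expectation ratio identifies the TACRR `E[f(1,X)/f(0,X)]`. -/
theorem regression_ratio_multiplicative {Ω 𝓧 𝓘 : Type*} [Fintype Ω]
    (w : Ω → ℝ) (hw0 : ∀ ω, 0 ≤ w ω) (hw1 : ∑ ω, w ω = 1)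
    (T : Ω → Bool) (X : Ω → 𝓧) (I : Ω → 𝓘)
    (f : Bool → 𝓧 → ℝ) (g : 𝓘 → 𝓧 → ℝ) (ε : Ω → ℝ) (Y : Ω → ℝ)
    (hY : ∀ ω, Y ω = f (T ω) (X ω) * g (I ω) (X ω) + ε ω)
    (hmean : ExW w ε = 0)
    (hindep : ∀ (s : ℝ) (t : Bool) (x : 𝓧) (i : 𝓘),
      PrW w (fun ω => ε ω = s ∧ T ω = t ∧ X ω = x ∧ I ω = i) =
      PrW w (fun ω => ε ω = s) * PrW w (fun ω => T ω = t ∧ X ω = x ∧ I ω = i))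
    (overlap : ∀ x i, 0 < PrW w (fun ω => X ω = x ∧ I ω = i) →
      0 < propens w T X I x i ∧ propens w T X I x i < 1)
    (hg : ∀ x i, 0 < PrW w (fun ω => X ω = x ∧ I ω = i) → g i x ≠ 0)
    (hf0 : ∀ x i, 0 < PrW w (fun ω => X ω = x ∧ I ω = i) → f false x ≠ 0) :
    (∀ x i, 0 < PrW w (fun ω => X ω = x ∧ I ω = i) →
      cEx w Y (fun ω => T ω = true ∧ X ω = x ∧ I ω = i) /
        cEx w Y (fun ω => T ω = false ∧ X ω = x ∧ I ω = i) =
      f true x / f false x) ∧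
    ExW w (fun ω => cEx w Y (fun ω' => T ω' = true ∧ X ω' = X ω ∧ I ω' = I ω) /
        cEx w Y (fun ω' => T ω' = false ∧ X ω' = X ω ∧ I ω' = I ω)) =
      ExW w (fun ω => f true (X ω) / f false (X ω)) := by
  -- value of the conditional expectation at a support point
  have cExval : ∀ (t : Bool) (x : 𝓧) (i : 𝓘),
      0 < PrW w (fun ω => T ω = t ∧ X ω = x ∧ I ω = i) →
      cEx w Y (fun ω => T ω = t ∧ X ω = x ∧ I ω = i) = f t x * g i x := by
    intro t x i hB
    refine cEx_const_add w Y ε (f t x * g i x) _ ?_ ?_ hB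
    · rintro ω ⟨h1, h2, h3⟩
      rw [hY ω, h1, h2, h3]
    · refine noise_zero w ε _ hmean fun s => ?_
      exact hindep s t x i
  -- positivity of the conditioning events from overlap
  have hpos : ∀ (t : Bool) (x : 𝓧) (i : 𝓘), 0 < PrW w (fun ω => X ω = x ∧ I ω = i) →
      0 < PrW w (fun ω => T ω = t ∧ X ω = x ∧ I ω = i) := by
    intro t x i hD
    obtain ⟨h1, h2⟩ := overlap x i hD
    have hprop : propens w T X I x i =
        PrW w (fun ω => T ω = true ∧ X ω = x ∧ I ω = i) /
          PrW w (fun ω => X ω = x ∧ I ω = i) := rfl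
    rw [hprop] at h1 h2
    have hsplit := PrW_split w T (fun ω => X ω = x ∧ I ω = i)
    cases t
    · have hlt : PrW w (fun ω => T ω = true ∧ X ω = x ∧ I ω = i) <
          PrW w (fun ω => X ω = x ∧ I ω = i) := (div_lt_one hD).mp h2
      have h3 : PrW w (fun ω => X ω = x ∧ I ω = i) =
          PrW w (fun ω => T ω = true ∧ X ω = x ∧ I ω = i) +
          PrW w (fun ω => T ω = false ∧ X ω = x ∧ I ω = i) := hsplit
      linarith
    · have := mul_pos h1 hD
      rwa [div_mul_cancel₀ _ (ne_of_gt hD)] at this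
  have ratio : ∀ (x : 𝓧) (i : 𝓘), 0 < PrW w (fun ω => X ω = x ∧ I ω = i) →
      cEx w Y (fun ω => T ω = true ∧ X ω = x ∧ I ω = i) /
        cEx w Y (fun ω => T ω = false ∧ X ω = x ∧ I ω = i) = f true x / f false x := by
    intro x i hD
    rw [cExval true x i (hpos true x i hD), cExval false x i (hpos false x i hD),
      mul_div_mul_right _ _ (hg x i hD)]
  refine ⟨ratio, ?_⟩
  unfold ExW
  refine Finset.sum_congr rfl fun ω _ => ?_
  rcases eq_or_lt_of_le (hw0 ω) with h | h
  · rw [← h]; ring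
  · have hD : 0 < PrW w (fun ω' => X ω' = X ω ∧ I ω' = I ω) := by
      refine lt_of_lt_of_le h ?_
      rw [PrW]
      exact Finset.single_le_sum (f := w) (fun ω' _ => hw0 ω') (by simp)
    beta_reduce
    rw [ratio (X ω) (I ω) hD]
end
end

section
/- Let i₀ be a real number with i₀ ≠ 0 and i₀ ≠ 1, let α, β be reals with β ≠ 0, and set α' = α − β/i₀. Then for all t ∈ {0,1} and all x ∈ ℝ, α·t·i₀ + x = α'·t·i₀ + β·t + x, and yet α ≠ α' + β. -/
/-- Elementary arithmetic lemma for non-identifiability: for `i₀ ∉ {0,1}`,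
`β ≠ 0` and `α' = α − β/i₀`, the two structural equations agree on all data points
`(t, x)` with `t ∈ {0,1}`, yet `α ≠ α' + β`. -/
theorem non_identifiability_arith (i₀ α β : ℝ) (hi0 : i₀ ≠ 0) (hi1 : i₀ ≠ 1)
    (hβ : β ≠ 0) (α' : ℝ) (hα' : α' = α - β / i₀) :
    (∀ t ∈ ({0, 1} : Set ℝ), ∀ x : ℝ,
      α * t * i₀ + x = α' * t * i₀ + β * t + x) ∧ α ≠ α' + β := by
  constructor
  · rintro t (rfl | rfl) x <;> subst hα' <;> field_simp <;> ring
  · intro h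
    rw [hα'] at h
    have : β / i₀ = β := by linarith
    rw [div_eq_iff hi0] at this
    have hb : β * (i₀ - 1) = 0 := by linarith
    rcases mul_eq_zero.1 hb with h1 | h2
    · exact hβ h1
    · exact hi1 (by linarith)
end
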